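/- Let 𝒫 = {P_f : f ∈ ℱ} and 𝒬 = {Q_f : f ∈ ℱ} be dominated statistical models on standard Borel sample spaces 𝒳 and 𝒳̃ respectively, indexed by the same set ℱ, and let f₀ ∈ ℱ and H₁ ⊆ ℱ. Suppose m·Δ(𝒫, 𝒬) ≤ ϱ for some ϱ > 0, where Δ(𝒫, 𝒬) = max{𝔡(𝒫;𝒬), 𝔡(𝒬;𝒫)}. Then | inf_{T ∈ 𝒯(𝒫)} R_𝒫(T, H₁) − inf_{T ∈ 𝒯(𝒬)} R_𝒬(T, H₁) | ≤ 2ϱ, where 𝒯 is any one of the four classes: shared-randomness or local-randomness distributed testing protocols with m servers satisfying either a b-bit bandwidth constraint or a local (ε,δ)-differential privacy constraint. -/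

import Mathlib

open MeasureTheory ProbabilityTheory Filter Set
open scoped ENNReal

lemma lintegral_le_of_setLe {Z : Type*} [MeasurableSpace Z]
    (α β : Measure Z) [IsProbabilityMeasure α] [IsProbabilityMeasure β]
    (c : ℝ≥0∞) (h : ∀ A : Set Z, MeasurableSet A → α A ≤ β A + c)
    (f : Z → ℝ≥0∞) (hf : Measurable f) (hf1 : ∀ z, f z ≤ 1) :
    ∫⁻ z, f z ∂α ≤ (∫⁻ z, f z ∂β) + c := by
  set g : Z → ℝ := fun z => (f z).toReal with hg
  have hgm : Measurable g := hf.ennreal_toReal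
  have hg1 : ∀ z, g z ≤ 1 := fun z => by
    have := hf1 z
    simpa using ENNReal.toReal_mono (by norm_num) this
  have hfg : ∀ z, ENNReal.ofReal (g z) = f z := fun z =>
    ENNReal.ofReal_toReal (lt_of_le_of_lt (hf1 z) (by norm_num)).ne
  have hlvl : ∀ t : ℝ, MeasurableSet {z | t < g z} := fun t => hgm measurableSet_Ioi
  have key : ∀ μ : Measure Z,
      ∫⁻ z, f z ∂μ = ∫⁻ t in Set.Ioc (0:ℝ) 1, μ {z | t < g z} := by
    intro μ
    have h1 : ∫⁻ z, f z ∂μ = ∫⁻ t in Set.Ioi (0:ℝ), μ {z | t < g z} := by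
      rw [← lintegral_eq_lintegral_meas_lt μ
        (Filter.Eventually.of_forall fun z => ENNReal.toReal_nonneg) hgm.aemeasurable]
      exact lintegral_congr fun z => (hfg z).symm
    have hsplit : Set.Ioi (0:ℝ) = Set.Ioc 0 1 ∪ Set.Ioi 1 :=
      (Set.Ioc_union_Ioi_eq_Ioi zero_le_one).symm
    have hdisj : Disjoint (Set.Ioc (0:ℝ) 1) (Set.Ioi 1) := Set.Ioc_disjoint_Ioi le_rfl
    have h2 : ∫⁻ t in Set.Ioi (1:ℝ), μ {z | t < g z} = 0 := by
      have : ∀ t ∈ Set.Ioi (1:ℝ), μ {z | t < g z} = 0 := by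
        intro t ht
        have : {z | t < g z} = (∅ : Set Z) := by
          ext z; simp only [Set.mem_setOf_eq, Set.mem_empty_iff_false, iff_false, not_lt]
          exact (hg1 z).trans (le_of_lt ht)
        rw [this]; simp
      calc ∫⁻ t in Set.Ioi (1:ℝ), μ {z | t < g z}
          = ∫⁻ _ in Set.Ioi (1:ℝ), (0:ℝ≥0∞) :=
            setLIntegral_congr_fun measurableSet_Ioi
              this
        _ = 0 := by simp
    rw [h1, hsplit, lintegral_union measurableSet_Ioi hdisj, h2, add_zero]
  rw [key α, key β]
  calc ∫⁻ t in Set.Ioc (0:ℝ) 1, α {z | t < g z}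
      ≤ ∫⁻ t in Set.Ioc (0:ℝ) 1, (β {z | t < g z} + c) :=
        lintegral_mono fun t => h _ (hlvl t)
    _ = (∫⁻ t in Set.Ioc (0:ℝ) 1, β {z | t < g z}) + c := by
        rw [lintegral_add_right _ measurable_const, lintegral_const,
          Measure.restrict_apply_univ, Real.volume_Ioc]
        norm_num


lemma pi_one_coord {ι : Type*} [Fintype ι] [DecidableEq ι] {Y : ι → Type*}
    [∀ i, MeasurableSpace (Y i)] (f g : ∀ i, Measure (Y i))
    [∀ i, IsProbabilityMeasure (f i)] [∀ i, IsProbabilityMeasure (g i)]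
    (i : ι) (hfg : ∀ j, j ≠ i → f j = g j) (c : ℝ≥0∞)
    (hi : ∀ A : Set (Y i), MeasurableSet A → f i A ≤ g i A + c)
    (A : Set (∀ j, Y j)) (hA : MeasurableSet A) :
    Measure.pi f A ≤ Measure.pi g A + c := by
  classical
  set p : ι → Prop := fun j => j ≠ i with hp
  haveI : DecidablePred p := fun j => instDecidableNot
  letI hq : Unique {j // ¬ p j} :=
    ⟨⟨⟨i, by simp [hp]⟩⟩, by rintro ⟨j, hj⟩; simp only [hp, not_not] at hj; subst hj; rfl⟩
  set e := MeasurableEquiv.piEquivPiSubtypeProd Y p with he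
  set B : Set ((∀ j : {j // p j}, Y j) × (∀ j : {j // ¬ p j}, Y j)) := e.symm ⁻¹' A with hB
  have hBm : MeasurableSet B := e.symm.measurable hA
  have hAB : e ⁻¹' B = A := by ext x; simp [hB]
  have hmap : ∀ h : ∀ j, Measure (Y j), ∀ inst : ∀ j, IsProbabilityMeasure (h j),
      Measure.pi h A =
        ((Measure.pi fun j : {j // p j} => h j).prod
          (Measure.pi fun j : {j // ¬ p j} => h j)) B := by
    intro h inst
    rw [← (measurePreserving_piEquivPiSubtypeProd h p).map_eq,
      Measure.map_apply e.measurable hBm, hAB]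
  rw [hmap f inferInstance, hmap g inferInstance]
  -- the first factors agree
  have hfst : (fun j : {j // p j} => f j) = (fun j : {j // p j} => g j) := by
    funext j; exact hfg j.1 j.2
  -- pointwise comparison of the second factors
  have hsnd : ∀ B' : Set (∀ j : {j // ¬ p j}, Y j), MeasurableSet B' →
      (Measure.pi fun j : {j // ¬ p j} => f j) B' ≤
        (Measure.pi fun j : {j // ¬ p j} => g j) B' + c := by
    intro B' hB'
    set φ := MeasurableEquiv.piUnique (fun j : {j // ¬ p j} => Y j) with hφ
    have hval : ∀ h : ∀ j, Measure (Y j), ∀ inst : ∀ j, IsProbabilityMeasure (h j),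
        (Measure.pi fun j : {j // ¬ p j} => h j) B' =
          h i (φ.symm ⁻¹' B') := by
      intro h inst
      have h1 : φ ⁻¹' (φ.symm ⁻¹' B') = B' := by ext x; simp
      rw [← h1, ← Measure.map_apply φ.measurable (φ.symm.measurable hB'),
        (measurePreserving_piUnique (fun j : {j // ¬ p j} => h j)).map_eq]
      rw [h1]; rfl
    rw [hval f inferInstance, hval g inferInstance]
    exact hi _ (φ.symm.measurable hB')
  rw [Measure.prod_apply hBm, Measure.prod_apply hBm, hfst]
  calc ∫⁻ a, (Measure.pi fun j : {j // ¬ p j} => f j) (Prod.mk a ⁻¹' B)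
        ∂(Measure.pi fun j : {j // p j} => g j)
      ≤ ∫⁻ a, ((Measure.pi fun j : {j // ¬ p j} => g j) (Prod.mk a ⁻¹' B) + c)
        ∂(Measure.pi fun j : {j // p j} => g j) :=
        lintegral_mono fun a => hsnd _ (measurable_prodMk_left hBm)
    _ = (∫⁻ a, (Measure.pi fun j : {j // ¬ p j} => g j) (Prod.mk a ⁻¹' B)
        ∂(Measure.pi fun j : {j // p j} => g j)) + c := by
        rw [lintegral_add_right _ measurable_const, lintegral_const, measure_univ, mul_one]

lemma pi_le_addCard {ι : Type*} [Fintype ι] [DecidableEq ι] {Y : ι → Type*}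
    [∀ i, MeasurableSpace (Y i)] (μ ν : ∀ i, Measure (Y i))
    [∀ i, IsProbabilityMeasure (μ i)] [∀ i, IsProbabilityMeasure (ν i)]
    (c : ℝ≥0∞) (h : ∀ i, ∀ A : Set (Y i), MeasurableSet A → μ i A ≤ ν i A + c)
    (A : Set (∀ j, Y j)) (hA : MeasurableSet A) :
    Measure.pi μ A ≤ Measure.pi ν A + (Fintype.card ι : ℝ≥0∞) * c := by
  classical
  set mix : Finset ι → ∀ i, Measure (Y i) := fun s i => if i ∈ s then ν i else μ i with hmix
  have hprob : ∀ s i, IsProbabilityMeasure (mix s i) := by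
    intro s i; simp only [hmix]; split <;> infer_instance
  have key : ∀ s : Finset ι, Measure.pi μ A ≤
      Measure.pi (mix s) A + (s.card : ℝ≥0∞) * c := by
    intro s
    induction s using Finset.induction_on with
    | empty =>
        have : mix ∅ = μ := by funext i; simp [hmix]
        rw [this]; simp
    | @insert i s hi ih =>
        haveI := hprob s
        haveI := hprob (insert i s)
        have hstep : Measure.pi (mix s) A ≤
            Measure.pi (mix (insert i s)) A + c := by
          refine pi_one_coord (mix s) (mix (insert i s)) i ?_ c ?_ A hA
          · intro j hj; simp only [hmix, Finset.mem_insert]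
            by_cases hjs : j ∈ s <;> simp [hjs, hj]
          · intro B hB
            have h1 : mix s i = μ i := by simp [hmix, hi]
            have h2 : mix (insert i s) i = ν i := by simp [hmix]
            rw [h1, h2]; exact h i B hB
        calc Measure.pi μ A ≤ Measure.pi (mix s) A + (s.card : ℝ≥0∞) * c := ih
          _ ≤ (Measure.pi (mix (insert i s)) A + c) + (s.card : ℝ≥0∞) * c :=
              add_le_add hstep le_rfl
          _ = Measure.pi (mix (insert i s)) A + ((insert i s).card : ℝ≥0∞) * c := by
              rw [Finset.card_insert_of_notMem hi]
              push_cast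
              ring
  have huniv : mix Finset.univ = ν := by funext i; simp [hmix]
  have := key Finset.univ
  rwa [huniv, Finset.card_univ] at this

lemma isProbabilityMeasure_bind' {Z W : Type*} [MeasurableSpace Z] [MeasurableSpace W]
    (μ : Measure Z) [IsProbabilityMeasure μ] (f : Z → Measure W) (hf : Measurable f)
    (hp : ∀ z, IsProbabilityMeasure (f z)) : IsProbabilityMeasure (μ.bind f) := by
  constructor
  rw [Measure.bind_apply MeasurableSet.univ hf.aemeasurable]
  have : ∀ z, f z Set.univ = 1 := fun z => (hp z).measure_univ
  simp [this]

lemma measurable_pi_family {U : Type*} [MeasurableSpace U] {ι : Type*} [Fintype ι]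
    {Y : ι → Type*} [∀ i, MeasurableSpace (Y i)]
    (g : ∀ j, U → Measure (Y j)) (hg : ∀ j, Measurable (g j))
    (hprob : ∀ j u, IsProbabilityMeasure (g j u)) :
    Measurable fun u => Measure.pi (fun j => g j u) := by
  apply Measure.measurable_of_measurable_coe
  intro A hA
  haveI : ∀ u, IsProbabilityMeasure (Measure.pi (fun j => g j u)) := fun u => by
    haveI := fun j => hprob j u
    infer_instance
  revert A
  have hhA : ∀ ⦃A : Set (∀ j, Y j)⦄, MeasurableSet A →
      Measurable fun u => Measure.pi (fun j => g j u) A := by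
    refine MeasurableSpace.induction_on_inter
      (C := fun A _ => Measurable fun u => Measure.pi (fun j => g j u) A)
      generateFrom_pi.symm isPiSystem_pi ?_ ?_ ?_ ?_
    · simp only [measure_empty]; exact measurable_const
    · intro t ht
      obtain ⟨A', hA', rfl⟩ := ht
      have : ∀ u, Measure.pi (fun j => g j u) (Set.pi Set.univ A') =
          ∏ j, g j u (A' j) := fun u => Measure.pi_pi _ _
      simp_rw [this]
      exact Finset.measurable_prod _ fun j _ =>
        (Measure.measurable_coe (hA' j (Set.mem_univ j))).comp (hg j)
    · intro t htm iht
      have : ∀ u, Measure.pi (fun j => g j u) tᶜ =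
          1 - Measure.pi (fun j => g j u) t := fun u => prob_compl_eq_one_sub htm
      simp_rw [this]
      exact Measurable.const_sub iht 1
    · intro f hd hm ihf
      have : ∀ u, Measure.pi (fun j => g j u) (⋃ n, f n) =
          ∑' n, Measure.pi (fun j => g j u) (f n) := fun u => measure_iUnion hd hm
      simp_rw [this]
      exact Measurable.ennreal_tsum ihf
  exact hhA


/-- A shared-randomness distributed testing protocol for data in `X` with `m`
servers: a probability space `(𝒰, P^U)` of shared randomness, Markov transcript
kernels `K^j` from `X × 𝒰` to spaces `Y^{(j)}`, and a measurable test `T` of the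
joint transcripts. -/
structure TestProtocol (X : Type) [MeasurableSpace X] (m : ℕ) where
  (U : Type)
  [mU : MeasurableSpace U]
  (PU : Measure U)
  (probU : IsProbabilityMeasure PU)
  (Y : Fin m → Type)
  [mY : ∀ j, MeasurableSpace (Y j)]
  (K : ∀ j, Kernel (X × U) (Y j))
  (markov : ∀ j, IsMarkovKernel (K j))
  (T : (∀ j, Y j) → Bool)
  (measT : Measurable T)

attribute [instance] TestProtocol.mU TestProtocol.mY

namespace TestProtocol

variable {X : Type} [MeasurableSpace X] {m : ℕ}

/-- The joint law `𝒬^Y_μ(A) = ∫ (⊗_j μK^j(·|·,u))(A) dP^U(u)` of the transcripts when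
each server observes data with law `μ`. -/
noncomputable def jointLaw (p : TestProtocol X m) (μ : Measure X) :
    Measure (∀ j, p.Y j) :=
  p.PU.bind fun u => Measure.pi fun j => μ.bind fun x => p.K j (x, u)

/-- The `b`-bit bandwidth constraint: each transcript space has at most `2^b`
elements. -/
def HasBandwidth (p : TestProtocol X m) (b : ℕ) : Prop :=
  ∀ j, Nonempty (p.Y j ↪ Fin (2 ^ b))

/-- A local-randomness protocol: the shared randomness is degenerate. -/
def IsLocalRandomness (p : TestProtocol X m) : Prop :=
  ∃ u₀ : p.U, p.PU = Measure.dirac u₀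

/-- The local `(ε,δ)`-differential privacy constraint: `P^U`-almost surely in `u`,
`K^j(A|x,u) ≤ e^ε K^j(A|x',u) + δ` for all measurable `A`, all data `x, x'` and all
servers `j`. -/
def IsDP (p : TestProtocol X m) (ε δ : ℝ) : Prop :=
  ∀ᵐ u ∂p.PU, ∀ (j : Fin m) (A : Set (p.Y j)) (x x' : X), MeasurableSet A →
    p.K j (x, u) A ≤ ENNReal.ofReal (Real.exp ε) * p.K j (x', u) A + ENNReal.ofReal δ

end TestProtocol

/-- Total variation distance between two measures:
`‖μ − ν‖_TV = sup_A |μ(A) − ν(A)|` over measurable sets `A`. -/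
noncomputable def tvDist {X : Type*} [MeasurableSpace X]
    (μ ν : Measure X) : ℝ :=
  ⨆ A : {A : Set X // MeasurableSet A}, |(μ A.1).toReal - (ν A.1).toReal|

/-- The deficiency `𝔡(𝒫;𝒬) = inf_C sup_f ‖P_f C − Q_f‖_TV` of the model `𝒫` with
respect to `𝒬`, the infimum running over all Markov kernels between the sample
spaces. -/
noncomputable def deficiency {F : Type*} {X Xt : Type*}
    [MeasurableSpace X] [MeasurableSpace Xt]
    (P : F → Measure X) (Q : F → Measure Xt) : ℝ :=
  ⨅ C : {C : Kernel X Xt // IsMarkovKernel C},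
    ⨆ f : F, tvDist ((P f).bind fun x => C.1 x) (Q f)

/-- The testing risk `R_𝒫(T, H₁) = ℙ^Y_{f₀}(T = 1) + sup_{f ∈ H₁} ℙ^Y_f(T = 0)` of a
distributed testing protocol for the model `𝒫 = {P_f}`, simple null `f₀`, composite
alternative `H₁`. -/
noncomputable def testingRisk {F X : Type} [MeasurableSpace X] {m : ℕ}
    (P : F → Measure X) (p : TestProtocol X m) (f0 : F) (H1 : Set F) : ℝ :=
  (p.jointLaw (P f0) {y | p.T y = true}).toReal +
    ⨆ f : H1, (p.jointLaw (P f.1) {y | p.T y = false}).toReal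



namespace TestProtocol

variable {Z : Type} [MeasurableSpace Z] {m : ℕ}

/-- The law of the transcript of server `j` given shared randomness `u`. -/
noncomputable def serverLaw (p : TestProtocol Z m) (μ : Measure Z) (j : Fin m) (u : p.U) :
    Measure (p.Y j) :=
  μ.bind fun x => p.K j (x, u)

lemma serverLaw_prob (p : TestProtocol Z m) (μ : Measure Z) [IsProbabilityMeasure μ]
    (j : Fin m) (u : p.U) : IsProbabilityMeasure (p.serverLaw μ j u) := by
  haveI := p.markov j
  exact isProbabilityMeasure_bind' μ _
    ((p.K j).measurable.comp measurable_prodMk_right) (fun x => inferInstance)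

lemma serverLaw_measurable (p : TestProtocol Z m) (μ : Measure Z) [IsProbabilityMeasure μ]
    (j : Fin m) : Measurable (p.serverLaw μ j) := by
  apply Measure.measurable_of_measurable_coe
  intro A hA
  have heq : ∀ u, p.serverLaw μ j u A = ∫⁻ x, p.K j (x, u) A ∂μ := fun u =>
    Measure.bind_apply hA ((p.K j).measurable.comp measurable_prodMk_right).aemeasurable
  simp_rw [heq]
  exact Measurable.lintegral_prod_right' (((p.K j).measurable_coe hA).comp measurable_swap)

lemma serverLaw_apply (p : TestProtocol Z m) (μ : Measure Z) (j : Fin m) (u : p.U)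
    {A : Set (p.Y j)} (hA : MeasurableSet A) :
    p.serverLaw μ j u A = ∫⁻ x, p.K j (x, u) A ∂μ :=
  Measure.bind_apply hA ((p.K j).measurable.comp measurable_prodMk_right).aemeasurable

lemma measurable_piServerLaw (p : TestProtocol Z m) (μ : Measure Z)
    [IsProbabilityMeasure μ] :
    Measurable fun u => Measure.pi fun j => p.serverLaw μ j u :=
  measurable_pi_family _ (fun j => p.serverLaw_measurable μ j)
    (fun j u => p.serverLaw_prob μ j u)

lemma jointLaw_apply (p : TestProtocol Z m) (μ : Measure Z) [IsProbabilityMeasure μ]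
    {A : Set (∀ j, p.Y j)} (hA : MeasurableSet A) :
    p.jointLaw μ A = ∫⁻ u, Measure.pi (fun j => p.serverLaw μ j u) A ∂p.PU :=
  Measure.bind_apply hA (p.measurable_piServerLaw μ).aemeasurable

lemma jointLaw_prob (p : TestProtocol Z m) (μ : Measure Z) [IsProbabilityMeasure μ] :
    IsProbabilityMeasure (p.jointLaw μ) := by
  haveI := p.probU
  haveI : ∀ u, IsProbabilityMeasure (Measure.pi fun j => p.serverLaw μ j u) := fun u => by
    haveI := fun j => p.serverLaw_prob μ j u
    infer_instance
  exact isProbabilityMeasure_bind' _ _ (p.measurable_piServerLaw μ) (fun u => this u)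

/-- Main comparison: if two data distributions are setwise within `c`, the joint
transcript laws are setwise within `m * c`. -/
lemma jointLaw_le (p : TestProtocol Z m) (α β : Measure Z)
    [IsProbabilityMeasure α] [IsProbabilityMeasure β] (c : ℝ≥0∞)
    (h : ∀ A : Set Z, MeasurableSet A → α A ≤ β A + c)
    {A : Set (∀ j, p.Y j)} (hA : MeasurableSet A) :
    p.jointLaw α A ≤ p.jointLaw β A + (m : ℝ≥0∞) * c := by
  haveI := p.probU
  rw [p.jointLaw_apply α hA, p.jointLaw_apply β hA]
  have hpt : ∀ u, Measure.pi (fun j => p.serverLaw α j u) A ≤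
      Measure.pi (fun j => p.serverLaw β j u) A + (m : ℝ≥0∞) * c := by
    intro u
    haveI := fun j => p.serverLaw_prob α j u
    haveI := fun j => p.serverLaw_prob β j u
    have hcoord : ∀ j, ∀ B : Set (p.Y j), MeasurableSet B →
        p.serverLaw α j u B ≤ p.serverLaw β j u B + c := by
      intro j B hB
      rw [p.serverLaw_apply α j u hB, p.serverLaw_apply β j u hB]
      haveI := p.markov j
      refine lintegral_le_of_setLe α β c h _
        (((p.K j).measurable_coe hB).comp measurable_prodMk_right) fun z => ?_
      exact prob_le_one
    have := pi_le_addCard (fun j => p.serverLaw α j u) (fun j => p.serverLaw β j u)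
      c hcoord A hA
    simpa using this
  calc ∫⁻ u, Measure.pi (fun j => p.serverLaw α j u) A ∂p.PU
      ≤ ∫⁻ u, (Measure.pi (fun j => p.serverLaw β j u) A + (m : ℝ≥0∞) * c) ∂p.PU :=
        lintegral_mono hpt
    _ = (∫⁻ u, Measure.pi (fun j => p.serverLaw β j u) A ∂p.PU) + (m : ℝ≥0∞) * c := by
        rw [lintegral_add_right _ measurable_const, lintegral_const, measure_univ, mul_one]

end TestProtocol

namespace TestProtocol

variable {X Xt : Type} [MeasurableSpace X] [MeasurableSpace Xt] {m : ℕ}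

/-- Compose a kernel `(Xt × U) → W` with a data-translation kernel `C : X → Xt`. -/
noncomputable def compKernel (C : Kernel X Xt) [IsMarkovKernel C] {U W : Type*}
    [MeasurableSpace U] [MeasurableSpace W] (κ : Kernel (Xt × U) W) [IsMarkovKernel κ] :
    Kernel (X × U) W where
  toFun := fun q => (C q.1).bind fun xt => κ (xt, q.2)
  measurable' := by
    apply Measure.measurable_of_measurable_coe
    intro A hA
    have heq : ∀ q : X × U, ((C q.1).bind fun xt => κ (xt, q.2)) A
        = ∫⁻ xt, κ (xt, q.2) A ∂(C q.1) := fun q =>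
      Measure.bind_apply hA (κ.measurable.comp measurable_prodMk_right).aemeasurable
    simp_rw [heq]
    exact Measurable.lintegral_kernel_prod_right
      (κ := (C.comap Prod.fst measurable_fst : Kernel (X × U) Xt))
      ((κ.measurable_coe hA).comp (measurable_snd.prodMk measurable_fst.snd))

lemma compKernel_apply (C : Kernel X Xt) [IsMarkovKernel C] {U W : Type*}
    [MeasurableSpace U] [MeasurableSpace W] (κ : Kernel (Xt × U) W) [IsMarkovKernel κ]
    (q : X × U) : compKernel C κ q = (C q.1).bind fun xt => κ (xt, q.2) := rfl

instance compKernel_markov (C : Kernel X Xt) [IsMarkovKernel C] {U W : Type*}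
    [MeasurableSpace U] [MeasurableSpace W] (κ : Kernel (Xt × U) W) [IsMarkovKernel κ] :
    IsMarkovKernel (compKernel C κ) := by
  constructor
  intro q
  rw [compKernel_apply]
  exact isProbabilityMeasure_bind' (C q.1) _
    (κ.measurable.comp measurable_prodMk_right) (fun xt => inferInstance)

/-- Pull back a testing protocol on `Xt` to one on `X` along a Markov kernel
`C : X → Xt`: each server first passes its data through `C`. -/
noncomputable def pullback (C : Kernel X Xt) [IsMarkovKernel C] (p : TestProtocol Xt m) :
    TestProtocol X m where
  U := p.U
  mU := p.mU
  PU := p.PU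
  probU := p.probU
  Y := p.Y
  mY := p.mY
  K := fun j => haveI := p.markov j; compKernel C (p.K j)
  markov := fun j => haveI := p.markov j; compKernel_markov C (p.K j)
  T := p.T
  measT := p.measT

lemma jointLaw_pullback (C : Kernel X Xt) [IsMarkovKernel C] (p : TestProtocol Xt m)
    (μ : Measure X) :
    (pullback C p).jointLaw μ = p.jointLaw (μ.bind fun x => C x) := by
  show p.PU.bind _ = p.PU.bind _
  congr 1
  funext u
  congr 1
  funext j
  show μ.bind (fun x => (C x).bind fun xt => p.K j (xt, u)) = _
  have hg : Measurable fun xt : Xt => p.K j (xt, u) :=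
    (p.K j).measurable.comp measurable_prodMk_right
  exact (Measure.bind_bind C.measurable.aemeasurable hg.aemeasurable).symm

lemma pullback_hasBandwidth (C : Kernel X Xt) [IsMarkovKernel C] (p : TestProtocol Xt m)
    (b : ℕ) (h : p.HasBandwidth b) : (pullback C p).HasBandwidth b := h

lemma pullback_isLocalRandomness (C : Kernel X Xt) [IsMarkovKernel C]
    (p : TestProtocol Xt m) (h : p.IsLocalRandomness) :
    (pullback C p).IsLocalRandomness := h

lemma pullback_isDP (C : Kernel X Xt) [IsMarkovKernel C] (p : TestProtocol Xt m)
    {ε δ : ℝ} (h : p.IsDP ε δ) : (pullback C p).IsDP ε δ := by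
  filter_upwards [h] with u hu
  intro j A x x' hA
  haveI := p.markov j
  have hmeas : Measurable fun xt : Xt => p.K j (xt, u) A :=
    ((p.K j).measurable_coe hA).comp measurable_prodMk_right
  have happ : ∀ z : X, (pullback C p).K j (z, u) A = ∫⁻ xt, p.K j (xt, u) A ∂(C z) :=
    fun z => Measure.bind_apply hA ((p.K j).measurable.comp measurable_prodMk_right).aemeasurable
  rw [happ x, happ x']
  have hpt : ∀ xt : Xt, p.K j (xt, u) A ≤
      ENNReal.ofReal (Real.exp ε) * (∫⁻ xt', p.K j (xt', u) A ∂(C x')) +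
        ENNReal.ofReal δ := by
    intro xt
    have h1 : p.K j (xt, u) A = ∫⁻ _, p.K j (xt, u) A ∂(C x') := by
      rw [lintegral_const, measure_univ, mul_one]
    rw [h1]
    calc ∫⁻ xt', p.K j (xt, u) A ∂(C x')
        ≤ ∫⁻ xt', (ENNReal.ofReal (Real.exp ε) * p.K j (xt', u) A +
            ENNReal.ofReal δ) ∂(C x') :=
          lintegral_mono fun xt' => hu j A xt xt' hA
      _ = ENNReal.ofReal (Real.exp ε) * (∫⁻ xt', p.K j (xt', u) A ∂(C x')) +
            ENNReal.ofReal δ := by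
          rw [lintegral_add_right _ measurable_const, lintegral_const_mul _ hmeas,
            lintegral_const, measure_univ, mul_one]
  calc ∫⁻ xt, p.K j (xt, u) A ∂(C x)
      ≤ ∫⁻ _, (ENNReal.ofReal (Real.exp ε) * (∫⁻ xt', p.K j (xt', u) A ∂(C x')) +
          ENNReal.ofReal δ) ∂(C x) := lintegral_mono hpt
    _ = _ := by rw [lintegral_const, measure_univ, mul_one]

end TestProtocol

/-- The trivial protocol: no randomness, constant transcripts, constant test. -/
noncomputable def trivialProtocol (Z : Type) [MeasurableSpace Z] (m : ℕ) :
    TestProtocol Z m where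
  U := Unit
  mU := inferInstance
  PU := Measure.dirac ()
  probU := inferInstance
  Y := fun _ => Unit
  mY := inferInstance
  K := fun _ => Kernel.const _ (Measure.dirac ())
  markov := fun _ => inferInstance
  T := fun _ => false
  measT := measurable_const

namespace trivialProtocol

variable (Z : Type) [MeasurableSpace Z] (m : ℕ)

lemma hasBandwidth (b : ℕ) : (trivialProtocol Z m).HasBandwidth b := fun _ =>
  ⟨⟨fun _ => ⟨0, by positivity⟩, fun (a b : Unit) _ => Subsingleton.elim a b⟩⟩

lemma isLocalRandomness : (trivialProtocol Z m).IsLocalRandomness := ⟨(), rfl⟩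

lemma isDP {ε δ : ℝ} (hε : 0 ≤ ε) (hδ : 0 ≤ δ) : (trivialProtocol Z m).IsDP ε δ := by
  refine Filter.Eventually.of_forall fun u => ?_
  intro j A x x' hA
  have h1 : (1 : ℝ≥0∞) ≤ ENNReal.ofReal (Real.exp ε) := by
    rw [show (1:ℝ≥0∞) = ENNReal.ofReal 1 by simp]
    exact ENNReal.ofReal_le_ofReal (Real.one_le_exp hε)
  have : (trivialProtocol Z m).K j (x, u) = (trivialProtocol Z m).K j (x', u) := rfl
  rw [this]
  calc (trivialProtocol Z m).K j (x', u) A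
      = 1 * (trivialProtocol Z m).K j (x', u) A := (one_mul _).symm
    _ ≤ ENNReal.ofReal (Real.exp ε) * (trivialProtocol Z m).K j (x', u) A :=
        mul_le_mul_left h1 _
    _ ≤ _ := le_self_add

end trivialProtocol

section RiskComparison

variable {F X Xt Z : Type} [MeasurableSpace X] [MeasurableSpace Xt] [MeasurableSpace Z]
  {m : ℕ}

lemma testingRisk_nonneg (P : F → Measure Z) (p : TestProtocol Z m) (f0 : F) (H1 : Set F) :
    0 ≤ testingRisk P p f0 H1 :=
  add_nonneg ENNReal.toReal_nonneg (Real.iSup_nonneg fun _ => ENNReal.toReal_nonneg)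

lemma testingRisk_le (P' Q' : F → Measure Z)
    (hP : ∀ f, IsProbabilityMeasure (P' f)) (hQ : ∀ f, IsProbabilityMeasure (Q' f))
    (p : TestProtocol Z m) (c : ℝ≥0∞) (hc : c ≠ ⊤)
    (h : ∀ f, ∀ A : Set Z, MeasurableSet A → P' f A ≤ Q' f A + c) (f0 : F) (H1 : Set F) :
    testingRisk P' p f0 H1 ≤ testingRisk Q' p f0 H1 + 2 * ((m : ℝ≥0∞) * c).toReal := by
  have hmc : (m : ℝ≥0∞) * c ≠ ⊤ := ENNReal.mul_ne_top (ENNReal.natCast_ne_top m) hc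
  have hterm : ∀ (f : F) (A : Set (∀ j, p.Y j)), MeasurableSet A →
      (p.jointLaw (P' f) A).toReal ≤ (p.jointLaw (Q' f) A).toReal +
        ((m : ℝ≥0∞) * c).toReal := by
    intro f A hA
    haveI := hP f; haveI := hQ f
    haveI := p.jointLaw_prob (P' f); haveI := p.jointLaw_prob (Q' f)
    have h1 := p.jointLaw_le (P' f) (Q' f) c (h f) hA
    have hfin : p.jointLaw (Q' f) A ≠ ⊤ := measure_ne_top _ _
    calc (p.jointLaw (P' f) A).toReal
        ≤ ((p.jointLaw (Q' f) A) + (m : ℝ≥0∞) * c).toReal :=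
          ENNReal.toReal_mono (ENNReal.add_ne_top.2 ⟨hfin, hmc⟩) h1
      _ = _ := ENNReal.toReal_add hfin hmc
  have hTtrue : MeasurableSet {y | p.T y = true} := p.measT (measurableSet_singleton true)
  have hTfalse : MeasurableSet {y | p.T y = false} := p.measT (measurableSet_singleton false)
  have h1 := hterm f0 _ hTtrue
  have h2 : (⨆ f : H1, (p.jointLaw (P' f.1) {y | p.T y = false}).toReal) ≤
      (⨆ f : H1, (p.jointLaw (Q' f.1) {y | p.T y = false}).toReal) +
        ((m : ℝ≥0∞) * c).toReal := by
    rcases isEmpty_or_nonempty H1 with hH | hH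
    · rw [Real.iSup_of_isEmpty, Real.iSup_of_isEmpty]
      positivity
    · have hbdd : BddAbove (Set.range fun f : H1 =>
          (p.jointLaw (Q' f.1) {y | p.T y = false}).toReal) := by
        refine ⟨1, ?_⟩
        rintro r ⟨f, rfl⟩
        haveI := hQ f.1
        haveI := p.jointLaw_prob (Q' f.1)
        exact ENNReal.toReal_le_of_le_ofReal zero_le_one (by simpa using prob_le_one)
      refine ciSup_le fun f => ?_
      exact (hterm f.1 _ hTfalse).trans (add_le_add (le_ciSup hbdd f) le_rfl)
  have := add_le_add h1 h2
  calc testingRisk P' p f0 H1 = _ + _ := rfl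
    _ ≤ _ := this
    _ = testingRisk Q' p f0 H1 + 2 * ((m : ℝ≥0∞) * c).toReal := by
        simp only [testingRisk]; ring

lemma testingRisk_pullback (C : Kernel X Xt) [IsMarkovKernel C] (q : TestProtocol Xt m)
    (P : F → Measure X) (f0 : F) (H1 : Set F) :
    testingRisk P (TestProtocol.pullback C q) f0 H1 =
      testingRisk (fun f => (P f).bind fun x => C x) q f0 H1 := by
  simp only [testingRisk, TestProtocol.jointLaw_pullback]
  rfl

end RiskComparison

section TV

variable {Z : Type*} [MeasurableSpace Z]

lemma tvDist_nonneg (μ ν : Measure Z) : 0 ≤ tvDist μ ν :=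
  Real.iSup_nonneg fun _ => abs_nonneg _

lemma abs_le_tvDist (μ ν : Measure Z) [IsProbabilityMeasure μ] [IsProbabilityMeasure ν]
    {A : Set Z} (hA : MeasurableSet A) :
    |(μ A).toReal - (ν A).toReal| ≤ tvDist μ ν := by
  have hbdd : BddAbove (Set.range fun A : {A : Set Z // MeasurableSet A} =>
      |(μ A.1).toReal - (ν A.1).toReal|) := by
    refine ⟨1, ?_⟩
    rintro r ⟨B, rfl⟩
    have h1 : (μ B.1).toReal ≤ 1 :=
      ENNReal.toReal_le_of_le_ofReal zero_le_one (by simpa using prob_le_one)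
    have h2 : (ν B.1).toReal ≤ 1 :=
      ENNReal.toReal_le_of_le_ofReal zero_le_one (by simpa using prob_le_one)
    have h3 : 0 ≤ (μ B.1).toReal := ENNReal.toReal_nonneg
    have h4 : 0 ≤ (ν B.1).toReal := ENNReal.toReal_nonneg
    rw [abs_le]; constructor <;> linarith
  exact le_ciSup hbdd ⟨A, hA⟩

lemma tvDist_le_one (μ ν : Measure Z) [IsProbabilityMeasure μ] [IsProbabilityMeasure ν] :
    tvDist μ ν ≤ 1 := by
  refine ciSup_le fun A => ?_
  have h1 : (μ A.1).toReal ≤ 1 :=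
    ENNReal.toReal_le_of_le_ofReal zero_le_one (by simpa using prob_le_one)
  have h2 : (ν A.1).toReal ≤ 1 :=
    ENNReal.toReal_le_of_le_ofReal zero_le_one (by simpa using prob_le_one)
  have h3 : 0 ≤ (μ A.1).toReal := ENNReal.toReal_nonneg
  have h4 : 0 ≤ (ν A.1).toReal := ENNReal.toReal_nonneg
  rw [abs_le]; constructor <;> linarith

lemma setLe_of_tvDist_le (μ ν : Measure Z) [IsProbabilityMeasure μ] [IsProbabilityMeasure ν]
    {r : ℝ} (hr : 0 ≤ r) (h : tvDist μ ν ≤ r) {A : Set Z} (hA : MeasurableSet A) :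
    μ A ≤ ν A + ENNReal.ofReal r := by
  have h1 : (μ A).toReal ≤ (ν A).toReal + r := by
    have := (abs_le.1 (abs_le_tvDist μ ν hA)).2.trans h
    linarith [(abs_le.1 (abs_le_tvDist μ ν hA)).1]
  calc μ A = ENNReal.ofReal (μ A).toReal := (ENNReal.ofReal_toReal (measure_ne_top μ A)).symm
    _ ≤ ENNReal.ofReal ((ν A).toReal + r) := ENNReal.ofReal_le_ofReal h1
    _ = ENNReal.ofReal (ν A).toReal + ENNReal.ofReal r :=
        ENNReal.ofReal_add ENNReal.toReal_nonneg hr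
    _ = ν A + ENNReal.ofReal r := by rw [ENNReal.ofReal_toReal (measure_ne_top ν A)]

end TV

section Deficiency

variable {F X Xt : Type} [MeasurableSpace X] [MeasurableSpace Xt]

lemma nonempty_of_prob {W : Type*} [MeasurableSpace W] (ρ : Measure W)
    (hρ : IsProbabilityMeasure ρ) : Nonempty W := by
  by_contra h
  haveI : IsEmpty W := not_nonempty_iff.1 h
  have h0 : ρ = 0 := ρ.eq_zero_of_isEmpty
  have h1 : ρ Set.univ = 1 := hρ.measure_univ
  rw [h0] at h1
  simp at h1

lemma deficiency_nonneg (P : F → Measure X) (Q : F → Measure Xt) :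
    0 ≤ deficiency P Q :=
  Real.iInf_nonneg fun _ => Real.iSup_nonneg fun _ => tvDist_nonneg _ _

lemma exists_kernel_near_deficiency [Nonempty F] (P : F → Measure X) (Q : F → Measure Xt)
    (hP : ∀ f, IsProbabilityMeasure (P f)) (hQ : ∀ f, IsProbabilityMeasure (Q f))
    {η : ℝ} (hη : 0 < η) :
    ∃ C : Kernel X Xt, ∃ _ : IsMarkovKernel C,
      ∀ f, tvDist ((P f).bind fun x => C x) (Q f) ≤ deficiency P Q + η := by
  obtain ⟨xt0⟩ : Nonempty Xt := nonempty_of_prob (Q (Classical.arbitrary F)) (hQ _)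
  haveI : Nonempty {C : Kernel X Xt // IsMarkovKernel C} :=
    ⟨⟨Kernel.const X (Measure.dirac xt0), inferInstance⟩⟩
  have hlt : deficiency P Q < deficiency P Q + η := lt_add_of_pos_right _ hη
  obtain ⟨⟨C, hC⟩, hCd⟩ := exists_lt_of_ciInf_lt hlt
  refine ⟨C, hC, fun f => ?_⟩
  haveI := hC
  haveI : ∀ g : F, IsProbabilityMeasure ((P g).bind fun x => C x) := fun g => by
    haveI := hP g
    exact isProbabilityMeasure_bind' (P g) _ C.measurable fun x => inferInstance
  have hbdd : BddAbove (Set.range fun g : F =>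
      tvDist ((P g).bind fun x => C x) (Q g)) := by
    refine ⟨1, ?_⟩
    rintro r ⟨g, rfl⟩
    haveI := hQ g
    exact tvDist_le_one _ _
  exact (le_ciSup hbdd f).trans hCd.le

lemma key_dir (P : F → Measure X) (Q : F → Measure Xt)
    (hP : ∀ f, IsProbabilityMeasure (P f)) (hQ : ∀ f, IsProbabilityMeasure (Q f))
    (f0 : F) (H1 : Set F) (m : ℕ) (ϱ : ℝ) (hϱ : 0 < ϱ)
    (hd : (m : ℝ) * deficiency P Q ≤ ϱ)
    (GX : TestProtocol X m → Prop) (GXt : TestProtocol Xt m → Prop)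
    (hne : ∃ q, GXt q)
    (hcl : ∀ (C : Kernel X Xt) (hC : IsMarkovKernel C) (q : TestProtocol Xt m),
      GXt q → GX (@TestProtocol.pullback X Xt _ _ m C hC q)) :
    (⨅ p : {p : TestProtocol X m // GX p}, testingRisk P p.1 f0 H1) ≤
      (⨅ q : {q : TestProtocol Xt m // GXt q}, testingRisk Q q.1 f0 H1) + 2 * ϱ := by
  haveI : Nonempty F := ⟨f0⟩
  haveI : Nonempty {q : TestProtocol Xt m // GXt q} := ⟨⟨hne.choose, hne.choose_spec⟩⟩
  refine le_of_forall_pos_le_add fun ε hε => ?_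
  set ε1 : ℝ := ε / (2 * (m : ℝ) + 2) with hε1_def
  have hm0 : (0:ℝ) ≤ (m:ℝ) := Nat.cast_nonneg m
  have hε1 : 0 < ε1 := by positivity
  -- choose a near-optimal protocol on the Q side
  have hltQ : (⨅ q : {q : TestProtocol Xt m // GXt q}, testingRisk Q q.1 f0 H1) <
      (⨅ q : {q : TestProtocol Xt m // GXt q}, testingRisk Q q.1 f0 H1) + ε1 :=
    lt_add_of_pos_right _ hε1
  obtain ⟨q, hq⟩ := exists_lt_of_ciInf_lt hltQ
  -- choose a near-optimal kernel
  obtain ⟨C, hC, hCd⟩ := exists_kernel_near_deficiency P Q hP hQ hε1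
  haveI := hC
  set d : ℝ := deficiency P Q + ε1 with hd_def
  have hd0 : 0 ≤ d := add_nonneg (deficiency_nonneg P Q) hε1.le
  set c : ℝ≥0∞ := ENNReal.ofReal d with hc_def
  have hc : c ≠ ⊤ := ENNReal.ofReal_ne_top
  haveI : ∀ g : F, IsProbabilityMeasure ((P g).bind fun x => C x) := fun g => by
    haveI := hP g
    exact isProbabilityMeasure_bind' (P g) _ C.measurable fun x => inferInstance
  have hset : ∀ f, ∀ A : Set Xt, MeasurableSet A →
      ((P f).bind fun x => C x) A ≤ Q f A + c := by
    intro f A hA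
    haveI := hQ f
    exact setLe_of_tvDist_le _ _ hd0 (hCd f) hA
  have hbdd : BddBelow (Set.range fun p : {p : TestProtocol X m // GX p} =>
      testingRisk P p.1 f0 H1) := by
    refine ⟨0, ?_⟩
    rintro r ⟨p, rfl⟩
    exact testingRisk_nonneg _ _ _ _
  have step1 : (⨅ p : {p : TestProtocol X m // GX p}, testingRisk P p.1 f0 H1) ≤
      testingRisk P (TestProtocol.pullback C q.1) f0 H1 :=
    ciInf_le hbdd ⟨TestProtocol.pullback C q.1, hcl C hC q.1 q.2⟩
  have step2 : testingRisk P (TestProtocol.pullback C q.1) f0 H1 =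
      testingRisk (fun f => (P f).bind fun x => C x) q.1 f0 H1 :=
    testingRisk_pullback C q.1 P f0 H1
  have step3 : testingRisk (fun f => (P f).bind fun x => C x) q.1 f0 H1 ≤
      testingRisk Q q.1 f0 H1 + 2 * ((m : ℝ≥0∞) * c).toReal :=
    testingRisk_le _ Q (fun g => inferInstance) hQ q.1 c hc hset f0 H1
  have hval : ((m : ℝ≥0∞) * c).toReal = (m : ℝ) * d := by
    rw [ENNReal.toReal_mul, hc_def, ENNReal.toReal_ofReal hd0]
    simp
  have hmd : (m : ℝ) * d ≤ ϱ + (m : ℝ) * ε1 := by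
    rw [hd_def, mul_add]
    linarith
  have hfinal : (2 * (m : ℝ) + 2) * ε1 = ε := by
    rw [hε1_def]
    field_simp
  calc (⨅ p : {p : TestProtocol X m // GX p}, testingRisk P p.1 f0 H1)
      ≤ testingRisk Q q.1 f0 H1 + 2 * ((m : ℝ≥0∞) * c).toReal := by
        rw [← step2] at step3
        exact step1.trans step3
    _ ≤ ((⨅ q : {q : TestProtocol Xt m // GXt q}, testingRisk Q q.1 f0 H1) + ε1) +
          2 * ((m : ℝ) * d) := by
        rw [hval] at *
        exact add_le_add hq.le le_rfl
    _ ≤ (⨅ q : {q : TestProtocol Xt m // GXt q}, testingRisk Q q.1 f0 H1) + 2 * ϱ + ε := by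
        have : ε1 + 2 * ((m:ℝ) * d) ≤ 2 * ϱ + ε := by
          have h2 : 2 * ((m:ℝ) * d) ≤ 2 * ϱ + 2 * ((m:ℝ) * ε1) := by linarith
          have h3 : ε1 + 2 * ((m:ℝ) * ε1) = (2 * (m:ℝ) + 2) * ε1 - ε1 := by ring
          have h4 : (2 * (m:ℝ) + 2) * ε1 = ε := hfinal
          linarith
        linarith

end Deficiency

/-- If the models `𝒫` and `𝒬` (dominated, on standard Borel sample spaces, with the
same index set) satisfy `m·Δ(𝒫,𝒬) ≤ ϱ`, then the minimax distributed testing risks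
for `H₀ : f = f₀` against `H₁` differ by at most `2ϱ`, for each of the four classes
of protocols: shared- or local-randomness, with a `b`-bit bandwidth constraint or a
local `(ε,δ)`-differential privacy constraint. -/
theorem deficiency_testing_risk_comparison
    {F X Xt : Type} [MeasurableSpace X] [StandardBorelSpace X]
    [MeasurableSpace Xt] [StandardBorelSpace Xt]
    (P : F → Measure X) (Q : F → Measure Xt)
    (hPprob : ∀ f, IsProbabilityMeasure (P f))
    (hQprob : ∀ f, IsProbabilityMeasure (Q f))
    (hPdom : ∃ μ : Measure X, SigmaFinite μ ∧ ∀ f, P f ≪ μ)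
    (hQdom : ∃ μ : Measure Xt, SigmaFinite μ ∧ ∀ f, Q f ≪ μ)
    (f0 : F) (H1 : Set F) (m : ℕ) (ϱ : ℝ) (hϱ : 0 < ϱ)
    (hdef : (m : ℝ) * max (deficiency P Q) (deficiency Q P) ≤ ϱ) :
    (∀ b : ℕ,
      |(⨅ p : {p : TestProtocol X m // p.HasBandwidth b},
          testingRisk P p.1 f0 H1) -
        (⨅ p : {p : TestProtocol Xt m // p.HasBandwidth b},
          testingRisk Q p.1 f0 H1)| ≤ 2 * ϱ)
    ∧ (∀ b : ℕ,
      |(⨅ p : {p : TestProtocol X m // p.HasBandwidth b ∧ p.IsLocalRandomness},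
          testingRisk P p.1 f0 H1) -
        (⨅ p : {p : TestProtocol Xt m // p.HasBandwidth b ∧ p.IsLocalRandomness},
          testingRisk Q p.1 f0 H1)| ≤ 2 * ϱ)
    ∧ (∀ ε δ : ℝ, 0 ≤ ε → 0 ≤ δ →
      |(⨅ p : {p : TestProtocol X m // p.IsDP ε δ},
          testingRisk P p.1 f0 H1) -
        (⨅ p : {p : TestProtocol Xt m // p.IsDP ε δ},
          testingRisk Q p.1 f0 H1)| ≤ 2 * ϱ)
    ∧ (∀ ε δ : ℝ, 0 ≤ ε → 0 ≤ δ →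
      |(⨅ p : {p : TestProtocol X m // p.IsDP ε δ ∧ p.IsLocalRandomness},
          testingRisk P p.1 f0 H1) -
        (⨅ p : {p : TestProtocol Xt m // p.IsDP ε δ ∧ p.IsLocalRandomness},
          testingRisk Q p.1 f0 H1)| ≤ 2 * ϱ) := by
  have hm0 : (0:ℝ) ≤ (m:ℝ) := Nat.cast_nonneg m
  have hdP : (m : ℝ) * deficiency P Q ≤ ϱ :=
    le_trans (mul_le_mul_of_nonneg_left (le_max_left _ _) hm0) hdef
  have hdQ : (m : ℝ) * deficiency Q P ≤ ϱ :=
    le_trans (mul_le_mul_of_nonneg_left (le_max_right _ _) hm0) hdef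
  refine ⟨fun b => ?_, fun b => ?_, fun ε δ hε hδ => ?_, fun ε δ hε hδ => ?_⟩
  · have h1 := key_dir P Q hPprob hQprob f0 H1 m ϱ hϱ hdP
      (fun p => p.HasBandwidth b) (fun q => q.HasBandwidth b)
      ⟨trivialProtocol Xt m, trivialProtocol.hasBandwidth Xt m b⟩
      (fun C hC q hq => by haveI := hC; exact TestProtocol.pullback_hasBandwidth C q b hq)
    have h2 := key_dir Q P hQprob hPprob f0 H1 m ϱ hϱ hdQ
      (fun p => p.HasBandwidth b) (fun q => q.HasBandwidth b)
      ⟨trivialProtocol X m, trivialProtocol.hasBandwidth X m b⟩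
      (fun C hC q hq => by haveI := hC; exact TestProtocol.pullback_hasBandwidth C q b hq)
    exact abs_sub_le_iff.2 ⟨by linarith, by linarith⟩
  · have h1 := key_dir P Q hPprob hQprob f0 H1 m ϱ hϱ hdP
      (fun p => p.HasBandwidth b ∧ p.IsLocalRandomness)
      (fun q => q.HasBandwidth b ∧ q.IsLocalRandomness)
      ⟨trivialProtocol Xt m, trivialProtocol.hasBandwidth Xt m b,
        trivialProtocol.isLocalRandomness Xt m⟩
      (fun C hC q hq => by
        haveI := hC
        exact ⟨TestProtocol.pullback_hasBandwidth C q b hq.1,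
          TestProtocol.pullback_isLocalRandomness C q hq.2⟩)
    have h2 := key_dir Q P hQprob hPprob f0 H1 m ϱ hϱ hdQ
      (fun p => p.HasBandwidth b ∧ p.IsLocalRandomness)
      (fun q => q.HasBandwidth b ∧ q.IsLocalRandomness)
      ⟨trivialProtocol X m, trivialProtocol.hasBandwidth X m b,
        trivialProtocol.isLocalRandomness X m⟩
      (fun C hC q hq => by
        haveI := hC
        exact ⟨TestProtocol.pullback_hasBandwidth C q b hq.1,
          TestProtocol.pullback_isLocalRandomness C q hq.2⟩)
    exact abs_sub_le_iff.2 ⟨by linarith, by linarith⟩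
  · have h1 := key_dir P Q hPprob hQprob f0 H1 m ϱ hϱ hdP
      (fun p => p.IsDP ε δ) (fun q => q.IsDP ε δ)
      ⟨trivialProtocol Xt m, trivialProtocol.isDP Xt m hε hδ⟩
      (fun C hC q hq => by haveI := hC; exact TestProtocol.pullback_isDP C q hq)
    have h2 := key_dir Q P hQprob hPprob f0 H1 m ϱ hϱ hdQ
      (fun p => p.IsDP ε δ) (fun q => q.IsDP ε δ)
      ⟨trivialProtocol X m, trivialProtocol.isDP X m hε hδ⟩
      (fun C hC q hq => by haveI := hC; exact TestProtocol.pullback_isDP C q hq)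
    exact abs_sub_le_iff.2 ⟨by linarith, by linarith⟩
  · have h1 := key_dir P Q hPprob hQprob f0 H1 m ϱ hϱ hdP
      (fun p => p.IsDP ε δ ∧ p.IsLocalRandomness)
      (fun q => q.IsDP ε δ ∧ q.IsLocalRandomness)
      ⟨trivialProtocol Xt m, trivialProtocol.isDP Xt m hε hδ,
        trivialProtocol.isLocalRandomness Xt m⟩
      (fun C hC q hq => by
        haveI := hC
        exact ⟨TestProtocol.pullback_isDP C q hq.1,
          TestProtocol.pullback_isLocalRandomness C q hq.2⟩)
    have h2 := key_dir Q P hQprob hPprob f0 H1 m ϱ hϱ hdQ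
      (fun p => p.IsDP ε δ ∧ p.IsLocalRandomness)
      (fun q => q.IsDP ε δ ∧ q.IsLocalRandomness)
      ⟨trivialProtocol X m, trivialProtocol.isDP X m hε hδ,
        trivialProtocol.isLocalRandomness X m⟩
      (fun C hC q hq => by
        haveI := hC
        exact ⟨TestProtocol.pullback_isDP C q hq.1,
          TestProtocol.pullback_isLocalRandomness C q hq.2⟩)
    exact abs_sub_le_iff.2 ⟨by linarith, by linarith⟩
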